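/- arXiv:1404.3999 — 7 statements merged into one kernel-verified Lean document; each statement's English description precedes it below -/
import Mathlib

section
/- Let p ≥ 1 and l1, l2 be positive reals. Define f(b) = -l1·b^(2p+4) + (l2 + l1)·b^(2p+3) - ((p+1)²·l2 - (2p+3)·l1)·b^(p+3) + 2·(p(p+2)·l2 - (2p+3)·l1)·b^(p+2) - ((p+1)²·l2 - (2p+3)·l1)·b^(p+1) + (l2 + l1)·b - l1. Then b = 1 is a root of f of multiplicity at least 4; that is, f(1) = f'(1) = f''(1) = f'''(1) = 0. -/
open Polynomial

noncomputable def wzPoly (p : ℕ) (l1 l2 : ℝ) : Polynomial ℝ :=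
  -C l1 * X ^ (2 * p + 4) + C (l2 + l1) * X ^ (2 * p + 3)
  - C (((p : ℝ) + 1) ^ 2 * l2 - (2 * (p : ℝ) + 3) * l1) * X ^ (p + 3)
  + C (2 * ((p : ℝ) * ((p : ℝ) + 2) * l2 - (2 * (p : ℝ) + 3) * l1)) * X ^ (p + 2)
  - C (((p : ℝ) + 1) ^ 2 * l2 - (2 * (p : ℝ) + 3) * l1) * X ^ (p + 1)
  + C (l2 + l1) * X - C l1

lemma iteratedDeriv_polynomial (n : ℕ) (P : Polynomial ℝ) :
    iteratedDeriv n (fun x => P.eval x) = fun x => ((⇑derivative)^[n] P).eval x := by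
  induction n with
  | zero => simp
  | succ n ih =>
    rw [iteratedDeriv_succ, ih]
    funext x
    rw [Function.iterate_succ_apply']
    exact Polynomial.deriv (p := (⇑derivative)^[n] P)

set_option maxRecDepth 8000 in
lemma wzPoly_eval (p : ℕ) (hp : 1 ≤ p) (l1 l2 : ℝ) (n : ℕ) (hn : n ≤ 3) :
    ((⇑derivative)^[n] (wzPoly p l1 l2)).eval 1 = 0 := by
  have hc : ((p - 1 : ℕ) : ℝ) = (p : ℝ) - 1 := by
    push_cast [Nat.cast_sub hp]; ring
  interval_cases n <;>
  · simp only [wzPoly, Function.iterate_succ_apply, Function.iterate_zero, id_eq,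
      derivative_add, derivative_sub, derivative_neg, derivative_mul, derivative_C,
      derivative_X_pow, derivative_X, derivative_one, zero_mul, mul_one, mul_zero,
      zero_add, add_zero, zero_sub, sub_zero, neg_zero, one_mul,
      Nat.add_sub_cancel, Nat.cast_add, Nat.cast_mul, Nat.cast_ofNat, Nat.cast_one,
      eval_add, eval_sub, eval_neg, eval_mul, eval_pow, eval_C, eval_X, eval_natCast,
      eval_one, one_pow]
    push_cast [hc]
    ring

/-- `b = 1` is a root of multiplicity at least `4` of the CSC condition polynomial `f`
for the Wang–Ziller manifold `M^{1,p}_{l₂,l₁}` (case `w₁ = w₂ = 1`):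
`f(1) = f'(1) = f''(1) = f'''(1) = 0`. -/
theorem stmt1 (p : ℕ) (hp : 1 ≤ p) (l1 l2 : ℝ) (hl1 : 0 < l1) (hl2 : 0 < l2)
    (f : ℝ → ℝ)
    (hf : ∀ b : ℝ, f b =
      -l1 * b ^ (2 * p + 4) + (l2 + l1) * b ^ (2 * p + 3)
      - (((p : ℝ) + 1) ^ 2 * l2 - (2 * (p : ℝ) + 3) * l1) * b ^ (p + 3)
      + 2 * ((p : ℝ) * ((p : ℝ) + 2) * l2 - (2 * (p : ℝ) + 3) * l1) * b ^ (p + 2)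
      - (((p : ℝ) + 1) ^ 2 * l2 - (2 * (p : ℝ) + 3) * l1) * b ^ (p + 1)
      + (l2 + l1) * b - l1) :
    f 1 = 0 ∧ iteratedDeriv 1 f 1 = 0 ∧ iteratedDeriv 2 f 1 = 0 ∧ iteratedDeriv 3 f 1 = 0 := by
  have hfe : f = fun b => (wzPoly p l1 l2).eval b := by
    funext b
    rw [hf b]
    simp [wzPoly]
    try ring
  subst hfe
  refine ⟨?_, ?_, ?_, ?_⟩
  · simpa using wzPoly_eval p hp l1 l2 0 (by norm_num)
  · rw [iteratedDeriv_polynomial]; exact wzPoly_eval p hp l1 l2 1 (by norm_num)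
  · rw [iteratedDeriv_polynomial]; exact wzPoly_eval p hp l1 l2 2 (by norm_num)
  · rw [iteratedDeriv_polynomial]; exact wzPoly_eval p hp l1 l2 3 (by norm_num)
end

section
/- Let l1, l2, w1, w2 be positive reals (case p = 1) and define f(b) = -l1·w1⁵·b⁶ + (l2 + l1·w2)·w1⁴·b⁵ - (4·l2 - l1·(2·w1 + 3·w2))·w1³·w2·b⁴ + (6·l2 - 5·l1·(w1 + w2))·w1²·w2²·b³ - (4·l2 - l1·(3·w1 + 2·w2))·w1·w2³·b² + (l2 + l1·w1)·w2⁴·b - l1·w2⁵, and g(b) = -l1·w1²·b³ + w1·(l2 - 2·l1·w2)·b² - w2·(l2 - 2·l1·w1)·b + l1·w2². Then f(b) = (b·w1 - w2)³·g(b) as polynomials in b. -/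
/-- The `p = 1` CSC condition polynomial `f` of the join `S³ ⋆_{l₁,l₂} S³_w`
factors as `f(b) = (b·w₁ - w₂)³ · g(b)`. -/
theorem stmt4 (l1 l2 w1 w2 : ℝ) (hl1 : 0 < l1) (hl2 : 0 < l2) (hw1 : 0 < w1) (hw2 : 0 < w2)
    (f g : ℝ → ℝ)
    (hf : ∀ b : ℝ, f b =
      -l1 * w1 ^ 5 * b ^ 6 + (l2 + l1 * w2) * w1 ^ 4 * b ^ 5
      - (4 * l2 - l1 * (2 * w1 + 3 * w2)) * w1 ^ 3 * w2 * b ^ 4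
      + (6 * l2 - 5 * l1 * (w1 + w2)) * w1 ^ 2 * w2 ^ 2 * b ^ 3
      - (4 * l2 - l1 * (3 * w1 + 2 * w2)) * w1 * w2 ^ 3 * b ^ 2
      + (l2 + l1 * w1) * w2 ^ 4 * b - l1 * w2 ^ 5)
    (hg : ∀ b : ℝ, g b =
      -l1 * w1 ^ 2 * b ^ 3 + w1 * (l2 - 2 * l1 * w2) * b ^ 2
      - w2 * (l2 - 2 * l1 * w1) * b + l1 * w2 ^ 2) :
    ∀ b : ℝ, f b = (b * w1 - w2) ^ 3 * g b := by
  intro b; rw [hf, hg]; ring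
end

section
/- Let l1, l2, w1, w2 be positive reals with l2 > 2·l1·w1 ≥ 2·l1·w2, and define g(b) = -l1·w1²·b³ + w1·(l2 - 2·l1·w2)·b² - w2·(l2 - 2·l1·w1)·b + l1·w2². Then g has no real root b < 0. -/
/-- When `l₂ > 2l₁w₁ ≥ 2l₁w₂`, the cubic factor `g` of the `p = 1` CSC condition
polynomial has no negative real root. -/
theorem stmt6 (l1 l2 w1 w2 : ℝ) (hl1 : 0 < l1) (hl2 : 0 < l2) (hw1 : 0 < w1) (hw2 : 0 < w2)
    (h1 : 2 * l1 * w1 < l2) (h2 : 2 * l1 * w2 ≤ 2 * l1 * w1)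
    (g : ℝ → ℝ)
    (hg : ∀ b : ℝ, g b =
      -l1 * w1 ^ 2 * b ^ 3 + w1 * (l2 - 2 * l1 * w2) * b ^ 2
      - w2 * (l2 - 2 * l1 * w1) * b + l1 * w2 ^ 2) :
    ∀ b : ℝ, b < 0 → g b ≠ 0 := by
  intro b hb
  rw [hg b]
  have hb2 : 0 < b ^ 2 := by nlinarith
  nlinarith [mul_pos (mul_pos hw1 (sub_pos.2 (lt_of_le_of_lt h2 h1))) hb2, mul_pos hl1 (pow_pos hw2 2), mul_pos (mul_pos hw2 (sub_pos.2 h1)) (neg_pos.2 hb), mul_pos (mul_pos (mul_pos hl1 (pow_pos hw1 2)) (neg_pos.2 hb)) hb2]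
end

section
/- Let p ≥ 1 be an integer and let l1, l2 be positive reals with l2 > (2·(2p+3)/(p·(p+1)))·l1. Set f(b) = -l1·b^(2p+4) + (l2 + l1)·b^(2p+3) - ((p+1)²·l2 - (2p+3)·l1)·b^(p+3) + 2·(p(p+2)·l2 - (2p+3)·l1)·b^(p+2) - ((p+1)²·l2 - (2p+3)·l1)·b^(p+1) + (l2 + l1)·b - l1. Then f has exactly 3 distinct positive real roots, and if b₀ ≠ 1 is one of them then so is 1/b₀. -/
/-!
Write `u = b + b⁻¹ - 2 = (b - 1)² / b`. Since `b ^ n + b⁻¹ ^ n` is a polynomial in `u`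
(a shifted Dickson polynomial, with explicit binomial coefficients), the palindromic `f`
factors as `f b = b ^ (p + 2) · u² · Q u`. The hypothesis on `l₂` makes the constant term of `Q`
positive, its top coefficient is `-l₁`, and an explicit coefficient ratio shows that its
coefficients change sign exactly once. By the one-sign-change case of Descartes' rule, `Q` has
exactly one positive root `s`, and `u = s` has exactly the two positive solutions `a`, `a⁻¹`.
-/

open Polynomial Finset Filter

theorem Nat.choose_add_two_add_choose (m r : ℕ) :
    (m + 2).choose (r + 2) + m.choose (r + 2) = 2 * (m + 1).choose (r + 2) + m.choose r := by
  simp only [Nat.choose_succ_succ]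
  ring

/-- The coefficient of `u ^ k` in `b ^ n + b⁻¹ ^ n` as a polynomial in `u = b + b⁻¹ - 2`.
The truncated subtraction makes the second term `1` at `n = k = 0`, giving the value `2`. -/
def powAddInvCoeff (n k : ℕ) : ℕ := (n + k).choose (2 * k) + (n + k - 1).choose (2 * k)

theorem powAddInvCoeff_zero_right (n : ℕ) : powAddInvCoeff n 0 = 2 := by
  simp [powAddInvCoeff]

theorem powAddInvCoeff_eq_zero {n k : ℕ} (h : n < k) : powAddInvCoeff n k = 0 := by
  simp only [powAddInvCoeff, Nat.add_eq_zero_iff]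
  constructor <;> apply Nat.choose_eq_zero_of_lt <;> omega

theorem powAddInvCoeff_pos {n k : ℕ} (h : k ≤ n) : 0 < powAddInvCoeff n k :=
  Nat.add_pos_left (Nat.choose_pos (by omega)) _

theorem powAddInvCoeff_one (n : ℕ) : (powAddInvCoeff n 1 : ℝ) = n ^ 2 := by
  rcases n with _ | n
  · simp [powAddInvCoeff]
  · rw [powAddInvCoeff, Nat.cast_add, Nat.cast_choose_two, Nat.cast_choose_two]
    push_cast
    ring

theorem powAddInvCoeff_add_two (n k : ℕ) :
    powAddInvCoeff (n + 2) (k + 1) + powAddInvCoeff n (k + 1)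
      = 2 * powAddInvCoeff (n + 1) (k + 1) + powAddInvCoeff (n + 1) k := by
  have h₁ : (n + k + 2 + 1).choose (2 * (k + 1)) + (n + k + 1).choose (2 * (k + 1))
      = 2 * (n + k + 1 + 1).choose (2 * (k + 1)) + (n + k + 1).choose (2 * k) :=
    Nat.choose_add_two_add_choose (n + k + 1) (2 * k)
  have h₂ : (n + k + 2).choose (2 * (k + 1)) + (n + k).choose (2 * (k + 1))
      = 2 * (n + k + 1).choose (2 * (k + 1)) + (n + k).choose (2 * k) :=
    Nat.choose_add_two_add_choose (n + k) (2 * k)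
  unfold powAddInvCoeff
  rw [show n + 2 + (k + 1) = n + k + 2 + 1 by omega, show n + (k + 1) = n + k + 1 by omega,
    show n + 1 + (k + 1) = n + k + 1 + 1 by omega, show n + 1 + k = n + k + 1 by omega]
  simp only [Nat.add_sub_cancel]
  omega

theorem powAddInvCoeff_succ_ratio (n k : ℕ) :
    (n : ℝ) * (n + 1 - k) * powAddInvCoeff (n + 1) k
      = (n + 1) * (n + k) * powAddInvCoeff n k := by
  rcases le_or_gt k n with hkn | hkn
  · obtain ⟨d, rfl⟩ := Nat.exists_eq_add_of_le hkn
    have h₁ := Nat.choose_mul_succ_eq (2 * k + d) (2 * k)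
    have h₂ : (2 * k + d - 1).choose (2 * k) * (2 * k + d) = (2 * k + d).choose (2 * k) * d := by
      rcases Nat.eq_zero_or_pos (2 * k + d) with h | h
      · obtain ⟨rfl, rfl⟩ : k = 0 ∧ d = 0 := by omega
        rfl
      · have := Nat.choose_mul_succ_eq (2 * k + d - 1) (2 * k)
        rwa [Nat.sub_add_cancel h, show 2 * k + d - 2 * k = d by omega] at this
    rw [show 2 * k + d + 1 - 2 * k = d + 1 by omega] at h₁
    have h₁' : ((2 * k + d).choose (2 * k) : ℝ) * (2 * k + d + 1)
        = (2 * k + d + 1).choose (2 * k) * (d + 1) := by exact_mod_cast h₁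
    have h₂' : ((2 * k + d - 1).choose (2 * k) : ℝ) * (2 * k + d)
        = (2 * k + d).choose (2 * k) * d := by exact_mod_cast h₂
    simp only [powAddInvCoeff, show k + d + 1 + k = 2 * k + d + 1 by omega,
      show 2 * k + d + 1 - 1 = 2 * k + d by omega, show k + d + k = 2 * k + d by omega]
    push_cast
    linear_combination -(k + d : ℝ) * h₁' - (k + d + 1 : ℝ) * h₂'
  · rw [powAddInvCoeff_eq_zero hkn]
    rcases Nat.lt_or_ge (n + 1) k with hk | hk
    · simp [powAddInvCoeff_eq_zero hk]
    · simp [show (k : ℝ) = n + 1 by exact_mod_cast (by omega : k = n + 1)]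

noncomputable def powAddInvPoly (R : Type*) [CommRing R] (n : ℕ) : R[X] :=
  (dickson 1 (1 : R) n).comp (X + 2)

section CommRing

variable {R : Type*} [CommRing R]

theorem powAddInvPoly_add_two (n : ℕ) :
    powAddInvPoly R (n + 2)
      = X * powAddInvPoly R (n + 1) + C 2 * powAddInvPoly R (n + 1) - powAddInvPoly R n := by
  rw [show (C 2 : R[X]) = 2 from map_ofNat C 2]
  simp only [powAddInvPoly, dickson_add_two, sub_comp, mul_comp, X_comp, C_1, one_mul]
  ring

theorem coeff_powAddInvPoly (n k : ℕ) : (powAddInvPoly R n).coeff k = powAddInvCoeff n k := by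
  induction n using Nat.twoStepInduction generalizing k with
  | zero =>
    rcases k with _ | k
    · simp [powAddInvPoly, powAddInvCoeff_zero_right]
      norm_num
    · simp [powAddInvPoly, powAddInvCoeff_eq_zero (Nat.succ_pos k), coeff_one]
  | one =>
    rcases k with _ | _ | k
    · simp [powAddInvPoly, powAddInvCoeff_zero_right]
    · simp [powAddInvPoly, powAddInvCoeff]
    · simp [powAddInvPoly, powAddInvCoeff_eq_zero (by omega : 1 < k + 2), coeff_X]
  | more n ih₀ ih₁ =>
    rw [powAddInvPoly_add_two, coeff_sub, coeff_add, coeff_C_mul]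
    rcases k with _ | k
    · simp [ih₀, ih₁, powAddInvCoeff_zero_right]
      norm_num
    · have := congrArg (Nat.cast : ℕ → R) (powAddInvCoeff_add_two n k)
      push_cast at this
      rw [coeff_X_mul, ih₀, ih₁, ih₁]
      linear_combination -this

end CommRing

theorem eval_powAddInvPoly {K : Type*} [Field K] {b : K} (hb : b ≠ 0) (n : ℕ) :
    (powAddInvPoly K n).eval (b + b⁻¹ - 2) = b ^ n + b⁻¹ ^ n := by
  rw [powAddInvPoly, eval_comp, eval_add, eval_X, eval_ofNat, sub_add_cancel,
    dickson_one_one_eval_add_inv _ _ (mul_inv_cancel₀ hb)]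

theorem add_inv_eq_add_inv_iff {K : Type*} [Field K] {x a : K} (hx : x ≠ 0) (ha : a ≠ 0) :
    x + x⁻¹ = a + a⁻¹ ↔ x = a ∨ x = a⁻¹ := by
  have key : (x - a) * (x - a⁻¹) = x * (x + x⁻¹ - (a + a⁻¹)) := by field_simp; ring
  rw [← sub_eq_zero, ← mul_eq_zero_iff_left hx, ← key, mul_eq_zero, sub_eq_zero, sub_eq_zero]

theorem exists_one_lt_add_inv_eq {t : ℝ} (ht : 2 < t) : ∃ a, 1 < a ∧ a + a⁻¹ = t := by
  have hd : 0 < t ^ 2 - 4 := by nlinarith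
  have hr := Real.sq_sqrt hd.le
  have hr0 := Real.sqrt_pos.2 hd
  refine ⟨(t + √(t ^ 2 - 4)) / 2, by linarith, ?_⟩
  have : (t + √(t ^ 2 - 4)) / 2 ≠ 0 := by positivity
  field_simp
  linear_combination hr

namespace Polynomial

theorem eval_mul_pow_lt_of_coeff_sign {Q : ℝ[X]} {J : ℕ} (h0 : 0 < Q.coeff 0)
    (hlt : ∀ i < J, 0 ≤ Q.coeff i) (hge : ∀ i, J ≤ i → Q.coeff i ≤ 0)
    {s t : ℝ} (hs : 0 < s) (hst : s < t) :
    Q.eval t * s ^ J < Q.eval s * t ^ J := by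
  have ht : 0 < t := hs.trans hst
  have hJ : J ≠ 0 := fun h => (hge 0 (by omega)).not_gt h0
  have hterm (i : ℕ) : Q.coeff i * (t ^ i * s ^ J - s ^ i * t ^ J) ≤ 0 := by
    rcases lt_or_ge i J with hi | hi
    · obtain ⟨d, rfl⟩ := Nat.exists_eq_add_of_lt hi
      rw [show t ^ i * s ^ (i + d + 1) - s ^ i * t ^ (i + d + 1)
          = (s * t) ^ i * (s ^ (d + 1) - t ^ (d + 1)) by ring]
      exact mul_nonpos_of_nonneg_of_nonpos (hlt i hi) (mul_nonpos_of_nonneg_of_nonpos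
        (by positivity) (sub_nonpos.2 (pow_le_pow_left₀ hs.le hst.le _)))
    · obtain ⟨d, rfl⟩ := Nat.exists_eq_add_of_le hi
      rw [show t ^ (J + d) * s ^ J - s ^ (J + d) * t ^ J = (s * t) ^ J * (t ^ d - s ^ d) by ring]
      exact mul_nonpos_of_nonpos_of_nonneg (hge _ hi) (mul_nonneg
        (by positivity) (sub_nonneg.2 (pow_le_pow_left₀ hs.le hst.le _)))
  have hterm0 : Q.coeff 0 * (t ^ 0 * s ^ J - s ^ 0 * t ^ J) < 0 := by
    simpa using mul_neg_of_pos_of_neg h0 (sub_neg.2 (pow_lt_pow_left₀ hst hs.le hJ))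
  have hsum : ∑ i ∈ range (Q.natDegree + 1), Q.coeff i * (t ^ i * s ^ J - s ^ i * t ^ J) < 0 :=
    sum_neg' (fun i _ => hterm i) ⟨0, mem_range.2 (Nat.succ_pos _), hterm0⟩
  rw [eval_eq_sum_range, eval_eq_sum_range, ← sub_neg, sum_mul, sum_mul, ← sum_sub_distrib]
  simpa only [mul_sub, mul_assoc] using hsum

theorem existsUnique_pos_eval_eq_zero_of_coeff_sign {Q : ℝ[X]} (h0 : 0 < Q.coeff 0)
    (hanti : ∀ i j, i ≤ j → Q.coeff i ≤ 0 → Q.coeff j ≤ 0) (hneg : ∃ j, Q.coeff j < 0) :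
    ∃! s, 0 < s ∧ Q.eval s = 0 := by
  obtain ⟨j, hj⟩ := hneg
  have hj0 : j ≠ 0 := by rintro rfl; exact hj.not_gt h0
  have hjdeg : j ≤ Q.natDegree := le_natDegree_of_ne_zero hj.ne
  have hbot : Tendsto Q.eval atTop atBot :=
    Q.tendsto_atBot_of_leadingCoeff_nonpos
      (natDegree_pos_iff_degree_pos.1 (by omega)) (hanti j _ hjdeg hj.le)
  obtain ⟨M, hM, hM0⟩ := ((hbot.eventually (eventually_lt_atBot 0)).and
    (eventually_gt_atTop 0)).exists
  obtain ⟨s, hsM, hs⟩ : ∃ s ∈ Set.Ioo 0 M, Q.eval s = 0 :=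
    intermediate_value_Ioo' hM0.le Q.continuous.continuousOn
      ⟨hM, by rwa [← coeff_zero_eq_eval_zero]⟩
  have hex : ∃ i, Q.coeff i ≤ 0 := ⟨j, hj.le⟩
  have hcross {s t : ℝ} := eval_mul_pow_lt_of_coeff_sign (J := Nat.find hex) (s := s) (t := t) h0
    (fun i hi => le_of_not_ge (Nat.find_min hex hi)) (fun i hi => hanti _ i hi (Nat.find_spec hex))
  refine ⟨s, ⟨hsM.1, hs⟩, fun t ⟨ht, htQ⟩ => ?_⟩
  rcases lt_trichotomy t s with h | h | h
  · simpa [hs, htQ] using hcross ht h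
  · exact h
  · simpa [hs, htQ] using hcross hsM.1 h

end Polynomial

def cscFun (p : ℕ) (l1 l2 b : ℝ) : ℝ :=
  -l1 * b ^ (2 * p + 4) + (l2 + l1) * b ^ (2 * p + 3)
    - (((p : ℝ) + 1) ^ 2 * l2 - (2 * (p : ℝ) + 3) * l1) * b ^ (p + 3)
    + 2 * ((p : ℝ) * ((p : ℝ) + 2) * l2 - (2 * (p : ℝ) + 3) * l1) * b ^ (p + 2)
    - (((p : ℝ) + 1) ^ 2 * l2 - (2 * (p : ℝ) + 3) * l1) * b ^ (p + 1)
    + (l2 + l1) * b - l1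

noncomputable def cscReduced (p : ℕ) (l1 l2 : ℝ) : ℝ[X] :=
  C (l2 + l1) * powAddInvPoly ℝ (p + 1) - C l1 * powAddInvPoly ℝ (p + 2)
    - C (((p : ℝ) + 1) ^ 2 * l2 - (2 * (p : ℝ) + 3) * l1) * powAddInvPoly ℝ 1
    + C (2 * ((p : ℝ) * ((p : ℝ) + 2) * l2 - (2 * (p : ℝ) + 3) * l1))

def cscCoeff (p : ℕ) (l1 l2 : ℝ) (k : ℕ) : ℝ :=
  (l2 + l1) * powAddInvCoeff (p + 1) k - l1 * powAddInvCoeff (p + 2) k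

section CSC

variable {p : ℕ} {l1 l2 : ℝ}

theorem cscFun_eq_pow_mul_eval {b : ℝ} (hb : b ≠ 0) :
    cscFun p l1 l2 b = b ^ (p + 2) * (cscReduced p l1 l2).eval (b + b⁻¹ - 2) := by
  simp only [cscReduced, eval_add, eval_sub, eval_mul, eval_C, eval_powAddInvPoly hb, cscFun,
    inv_pow]
  field_simp
  ring

theorem coeff_cscReduced_add_two (k : ℕ) :
    (cscReduced p l1 l2).coeff (k + 2) = cscCoeff p l1 l2 (k + 2) := by
  simp only [cscReduced, coeff_add, coeff_sub, coeff_C_mul, coeff_C, coeff_powAddInvPoly,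
    powAddInvCoeff_eq_zero (by omega : 1 < k + 2), cscCoeff]
  simp

theorem X_sq_dvd_cscReduced : X ^ 2 ∣ cscReduced p l1 l2 := by
  refine X_pow_dvd_iff.2 fun d hd => ?_
  interval_cases d
  all_goals
    simp only [cscReduced, coeff_add, coeff_sub, coeff_C_mul, coeff_C, coeff_powAddInvPoly,
      powAddInvCoeff_zero_right, powAddInvCoeff_one]
    norm_num
    ring

theorem exists_cscFun_eq_pow_mul_sq_mul_eval :
    ∃ Q : ℝ[X], (∀ b ≠ 0, cscFun p l1 l2 b
        = b ^ (p + 2) * ((b + b⁻¹ - 2) ^ 2 * Q.eval (b + b⁻¹ - 2))) ∧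
      ∀ j, Q.coeff j = cscCoeff p l1 l2 (j + 2) := by
  obtain ⟨Q, hQ⟩ := X_sq_dvd_cscReduced (p := p) (l1 := l1) (l2 := l2)
  refine ⟨Q, fun b hb => ?_, fun j => ?_⟩
  · rw [cscFun_eq_pow_mul_eval hb, hQ, eval_mul, eval_pow, eval_X]
  · rw [← coeff_cscReduced_add_two, hQ, coeff_X_pow_mul]

/-- The sign of `cscCoeff p l1 l2 k`, for `k ≤ p + 1`, is that of the second factor on the
right, which is affine and decreasing in `k`. -/
theorem cscCoeff_mul_eq (k : ℕ) :
    ((p : ℝ) + 1) * (p + 2 - k) * cscCoeff p l1 l2 k = powAddInvCoeff (p + 1) k *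
      ((l2 + l1) * ((p + 1) * (p + 2 - k)) - l1 * ((p + 2) * (p + 1 + k))) := by
  have := powAddInvCoeff_succ_ratio (p + 1) k
  push_cast at this
  rw [cscCoeff]
  linear_combination (-l1) * this

theorem cscCoeff_nonpos_of_le (hl1 : 0 ≤ l1) (hl2 : 0 ≤ l2) {i j : ℕ} (hij : i ≤ j)
    (hi : cscCoeff p l1 l2 i ≤ 0) : cscCoeff p l1 l2 j ≤ 0 := by
  rcases lt_or_ge (p + 1) j with hj | hj
  · rw [cscCoeff, powAddInvCoeff_eq_zero hj]
    simpa using mul_nonneg hl1 (Nat.cast_nonneg (powAddInvCoeff (p + 2) j))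
  have hA (k : ℕ) (hk : k ≤ p + 1) : (0 : ℝ) < powAddInvCoeff (p + 1) k :=
    Nat.cast_pos.2 (powAddInvCoeff_pos hk)
  have hfac (k : ℕ) (hk : k ≤ p + 1) : (0 : ℝ) < ((p : ℝ) + 1) * (p + 2 - k) := by
    have : (k : ℝ) ≤ p + 1 := by exact_mod_cast hk
    nlinarith
  have hci := cscCoeff_mul_eq (p := p) (l1 := l1) (l2 := l2) i
  have hcj := cscCoeff_mul_eq (p := p) (l1 := l1) (l2 := l2) j
  have hij' : (i : ℝ) ≤ j := by exact_mod_cast hij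
  set σ : ℕ → ℝ := fun k => (l2 + l1) * ((p + 1) * (p + 2 - k)) - l1 * ((p + 2) * (p + 1 + k))
  have hσi : σ i ≤ 0 := by
    have := hA i (hij.trans hj)
    have := hfac i (hij.trans hj)
    nlinarith
  have hσij : σ j ≤ σ i := by
    have : 0 ≤ ((l2 + l1) * (p + 1) + l1 * (p + 2)) * ((j : ℝ) - i) :=
      mul_nonneg (by positivity) (sub_nonneg.2 hij')
    simp only [σ]
    linarith
  have := hA j hj
  have := hfac j hj
  nlinarith

theorem cscCoeff_two_pos (hp : 1 ≤ p)
    (hgt : (2 * (2 * (p : ℝ) + 3) / ((p : ℝ) * ((p : ℝ) + 1))) * l1 < l2) :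
    0 < cscCoeff p l1 l2 2 := by
  have hσ : 0 < (l2 + l1) * ((p + 1) * (p + 2 - 2)) - l1 * ((p + 2) * (p + 1 + 2)) := by
    rw [div_mul_eq_mul_div, div_lt_iff₀ (by positivity)] at hgt
    nlinarith
  have h := cscCoeff_mul_eq (p := p) (l1 := l1) (l2 := l2) 2
  have hA : (0 : ℝ) < powAddInvCoeff (p + 1) 2 := Nat.cast_pos.2 (powAddInvCoeff_pos (by omega))
  have : 0 < ((p : ℝ) + 1) * (p + 2 - (2 : ℕ)) * cscCoeff p l1 l2 2 := by
    rw [h]; push_cast; positivity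
  exact pos_of_mul_pos_right this (by norm_num; positivity)

theorem cscCoeff_add_two_neg (hl1 : 0 < l1) : cscCoeff p l1 l2 (p + 2) < 0 := by
  rw [cscCoeff, powAddInvCoeff_eq_zero (by omega)]
  have : (0 : ℝ) < powAddInvCoeff (p + 2) (p + 2) := Nat.cast_pos.2 (powAddInvCoeff_pos le_rfl)
  simp only [Nat.cast_zero, mul_zero, zero_sub, neg_neg_iff_pos]
  positivity

theorem exists_cscFun_eq_zero_iff (hp : 1 ≤ p) (hl1 : 0 < l1) (hl2 : 0 < l2)
    (hgt : (2 * (2 * (p : ℝ) + 3) / ((p : ℝ) * ((p : ℝ) + 1))) * l1 < l2) :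
    ∃ a, 1 < a ∧ ∀ x, 0 < x → (cscFun p l1 l2 x = 0 ↔ x = 1 ∨ x = a ∨ x = a⁻¹) := by
  obtain ⟨Q, hfQ, hQ⟩ := exists_cscFun_eq_pow_mul_sq_mul_eval (p := p) (l1 := l1) (l2 := l2)
  have hQ0 : 0 < Q.coeff 0 := by rw [hQ]; exact cscCoeff_two_pos hp hgt
  obtain ⟨s, ⟨hs, hQs⟩, hQuniq⟩ := existsUnique_pos_eval_eq_zero_of_coeff_sign hQ0
    (fun i j hij => by simpa only [hQ] using cscCoeff_nonpos_of_le hl1.le hl2.le (by omega))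
    ⟨p, by rw [hQ]; exact cscCoeff_add_two_neg hl1⟩
  obtain ⟨a, ha, has⟩ := exists_one_lt_add_inv_eq (by linarith : 2 < s + 2)
  refine ⟨a, ha, fun x hx => ?_⟩
  have hu : 0 ≤ x + x⁻¹ - 2 := by
    rw [show x + x⁻¹ - 2 = (x - 1) ^ 2 / x by field_simp; ring]
    positivity
  have hQu : Q.eval (x + x⁻¹ - 2) = 0 ↔ x + x⁻¹ - 2 = s := by
    refine ⟨fun h => hQuniq _ ⟨lt_of_le_of_ne hu fun h0 => ?_, h⟩, fun h => h ▸ hQs⟩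
    rw [← h0, ← coeff_zero_eq_eval_zero] at h
    exact hQ0.ne' h
  have h1 : x + x⁻¹ - 2 = 0 ↔ x = 1 := by
    simpa [sub_eq_zero, one_add_one_eq_two] using add_inv_eq_add_inv_iff hx.ne' one_ne_zero
  have hsa : x + x⁻¹ - 2 = s ↔ x = a ∨ x = a⁻¹ := by
    rw [← add_inv_eq_add_inv_iff hx.ne' (by positivity), has, sub_eq_iff_eq_add]
  rw [hfQ x hx.ne', mul_eq_zero, mul_eq_zero, pow_eq_zero_iff two_ne_zero, hQu,
    or_iff_right (pow_ne_zero _ hx.ne'), h1, hsa]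

end CSC

/-- If `l₂ > (2(2p+3)/(p(p+1)))·l₁` then the CSC condition polynomial `f` for the
Wang–Ziller manifold `M^{1,p}_{l₂,l₁}` has exactly three distinct positive real roots,
and the roots different from `1` come in reciprocal pairs. -/
theorem stmt9 (p : ℕ) (hp : 1 ≤ p) (l1 l2 : ℝ) (hl1 : 0 < l1) (hl2 : 0 < l2)
    (hgt : (2 * (2 * (p : ℝ) + 3) / ((p : ℝ) * ((p : ℝ) + 1))) * l1 < l2)
    (f : ℝ → ℝ)
    (hf : ∀ b : ℝ, f b =
      -l1 * b ^ (2 * p + 4) + (l2 + l1) * b ^ (2 * p + 3)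
      - (((p : ℝ) + 1) ^ 2 * l2 - (2 * (p : ℝ) + 3) * l1) * b ^ (p + 3)
      + 2 * ((p : ℝ) * ((p : ℝ) + 2) * l2 - (2 * (p : ℝ) + 3) * l1) * b ^ (p + 2)
      - (((p : ℝ) + 1) ^ 2 * l2 - (2 * (p : ℝ) + 3) * l1) * b ^ (p + 1)
      + (l2 + l1) * b - l1) :
    (∃ a b c : ℝ, a ≠ b ∧ a ≠ c ∧ b ≠ c ∧ 0 < a ∧ 0 < b ∧ 0 < c ∧
      {x : ℝ | 0 < x ∧ f x = 0} = {a, b, c}) ∧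
    ∀ b₀ : ℝ, 0 < b₀ → f b₀ = 0 → b₀ ≠ 1 → f (1 / b₀) = 0 := by
  obtain rfl : f = cscFun p l1 l2 := funext hf
  obtain ⟨a, ha, hroots⟩ := exists_cscFun_eq_zero_iff hp hl1 hl2 hgt
  have ha0 : 0 < a := one_pos.trans ha
  have hainv : a⁻¹ < 1 := inv_lt_one_of_one_lt₀ ha
  refine ⟨⟨a⁻¹, 1, a, hainv.ne, (hainv.trans ha).ne, ha.ne, by positivity, one_pos, ha0, ?_⟩, ?_⟩
  · ext x
    simp only [Set.mem_ofPred_eq, Set.mem_insert_iff, Set.mem_singleton_iff]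
    constructor
    · rintro ⟨hx, hfx⟩
      rcases (hroots x hx).1 hfx with h | h | h <;> simp [h]
    · rintro (h | h | h) <;> subst x
      exacts [⟨by positivity, (hroots _ (by positivity)).2 (by simp)⟩,
        ⟨one_pos, (hroots 1 one_pos).2 (by simp)⟩, ⟨ha0, (hroots a ha0).2 (by simp)⟩]
  · intro b₀ hb₀ hfb₀ hb₀1
    rw [one_div, hroots _ (inv_pos.2 hb₀)]
    rcases (hroots b₀ hb₀).1 hfb₀ with h | rfl | rfl
    · exact absurd h hb₀1
    · simp
    · simp
end

section
/- Let p ≥ 1 be an integer. For any coprime positive integers (l1, l2) satisfying 2·(1 + 2^p·(2^(p+2) - (p² + 2p + 5)))·l2 = (-1 + 2^(p+1)·(2^(p+2) - (2p+3)))·l1, the polynomial f(b) = -l1·b^(2p+4) + (l2 + l1)·b^(2p+3) - ((p+1)²·l2 - (2p+3)·l1)·b^(p+3) + 2·(p(p+2)·l2 - (2p+3)·l1)·b^(p+2) - ((p+1)²·l2 - (2p+3)·l1)·b^(p+1) + (l2 + l1)·b - l1 satisfies f(1/2) = f(1) = f(2) = 0. -/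
/-- For coprime positive integers `(l₁, l₂)` satisfying
`2(1 + 2^p(2^{p+2} - (p²+2p+5)))·l₂ = (-1 + 2^{p+1}(2^{p+2} - (2p+3)))·l₁`,
the CSC condition polynomial `f` has roots `b = 1/2, 1, 2`. -/
theorem stmt12 (p : ℕ) (hp : 1 ≤ p) (l1 l2 : ℕ) (hl1 : 0 < l1) (hl2 : 0 < l2)
    (hcop : Nat.Coprime l1 l2)
    (hrel : 2 * (1 + (2:ℤ) ^ p * ((2:ℤ) ^ (p + 2) - ((p:ℤ) ^ 2 + 2 * p + 5))) * l2
      = (-1 + (2:ℤ) ^ (p + 1) * ((2:ℤ) ^ (p + 2) - (2 * (p:ℤ) + 3))) * l1)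
    (f : ℝ → ℝ)
    (hf : ∀ b : ℝ, f b =
      -(l1:ℝ) * b ^ (2 * p + 4) + ((l2:ℝ) + l1) * b ^ (2 * p + 3)
      - (((p : ℝ) + 1) ^ 2 * l2 - (2 * (p : ℝ) + 3) * l1) * b ^ (p + 3)
      + 2 * ((p : ℝ) * ((p : ℝ) + 2) * l2 - (2 * (p : ℝ) + 3) * l1) * b ^ (p + 2)
      - (((p : ℝ) + 1) ^ 2 * l2 - (2 * (p : ℝ) + 3) * l1) * b ^ (p + 1)
      + ((l2:ℝ) + l1) * b - l1) :
    f (1/2) = 0 ∧ f 1 = 0 ∧ f 2 = 0 := by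
  have hR : 2 * (1 + (2:ℝ) ^ p * ((2:ℝ) ^ (p + 2) - ((p:ℝ) ^ 2 + 2 * p + 5))) * l2
      = (-1 + (2:ℝ) ^ (p + 1) * ((2:ℝ) ^ (p + 2) - (2 * (p:ℝ) + 3))) * l1 := by
    exact_mod_cast congrArg (fun z : ℤ => (z : ℝ)) hrel
  refine ⟨?_, ?_, ?_⟩
  · rw [hf]
    simp only [div_pow, one_pow]
    field_simp
    linear_combination ((2:ℝ) ^ (p * 5) * 1024) * hR
  · rw [hf]; ring
  · rw [hf]; linear_combination hR
end

section
/- Let p > 1 and let l1, l2, w1, w2 be positive integers with gcd(w1, w2) = 1. In the graded ring R = ℤ[x, y]/(w1·w2·l1²·x², x^(p+1), x²·y, y²) with deg x = 2 and deg y = 2p+1, the degree-4 component is a cyclic group of order w1·w2·l1² generated by x², and the rationalization R ⊗ ℚ is isomorphic as a graded ring to ℚ[x, y]/(x², y²) ≅ H*(S² × S^(2p+1), ℚ). -/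
open MvPolynomial

private noncomputable def stmt13phi (N : ℕ) : MvPolynomial (Fin 2) ℤ →+* Polynomial (ZMod N) :=
  eval₂Hom (Polynomial.C.comp (Int.castRingHom (ZMod N)))
    (fun i : Fin 2 => if i = 0 then Polynomial.X else 0)

/-- In the integral cohomology ring `R = ℤ[x,y]/(w₁w₂l₁²x², x^{p+1}, x²y, y²)` of the join
`M_{l₁,l₂,w}` (with `deg x = 2`, `deg y = 2p+1`, `p > 1`), the degree-4 component is the
cyclic group generated by `x²`, of order `w₁w₂l₁²`; and rationally the ring becomes
`ℚ[x,y]/(x², y²) ≅ H*(S² × S^{2p+1}, ℚ)`. -/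
theorem stmt13 (p : ℕ) (hp : 1 < p) (l1 l2 w1 w2 : ℕ)
    (hl1 : 0 < l1) (hl2 : 0 < l2) (hw1 : 0 < w1) (hw2 : 0 < w2)
    (hwcop : Nat.Coprime w1 w2) :
    addOrderOf (Ideal.Quotient.mk
        (Ideal.span ({C ((w1 * w2 * l1 ^ 2 : ℕ) : ℤ) * X 0 ^ 2, X 0 ^ (p + 1),
          X 0 ^ 2 * X 1, X 1 ^ 2} : Set (MvPolynomial (Fin 2) ℤ)))
        (X 0 ^ 2)) = w1 * w2 * l1 ^ 2 ∧
    Nonempty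
      ((MvPolynomial (Fin 2) ℚ ⧸
          Ideal.span ({C ((w1 * w2 * l1 ^ 2 : ℕ) : ℚ) * X 0 ^ 2, X 0 ^ (p + 1),
            X 0 ^ 2 * X 1, X 1 ^ 2} : Set (MvPolynomial (Fin 2) ℚ))) ≃+*
        (MvPolynomial (Fin 2) ℚ ⧸
          Ideal.span ({X 0 ^ 2, X 1 ^ 2} : Set (MvPolynomial (Fin 2) ℚ)))) := by
  set N : ℕ := w1 * w2 * l1 ^ 2 with hN
  have hNpos : 0 < N := by positivity
  constructor
  · -- order part
    set I : Ideal (MvPolynomial (Fin 2) ℤ) :=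
      Ideal.span ({C ((N : ℕ) : ℤ) * X 0 ^ 2, X 0 ^ (p + 1),
        X 0 ^ 2 * X 1, X 1 ^ 2} : Set (MvPolynomial (Fin 2) ℤ)) with hI
    haveI : NeZero N := ⟨hNpos.ne'⟩
    have hIle : I ≤ Ideal.comap (stmt13phi N)
        (Ideal.span {(Polynomial.X : Polynomial (ZMod N)) ^ 3}) := by
      rw [hI, Ideal.span_le]
      intro f hf
      simp only [Set.mem_insert_iff, Set.mem_singleton_iff] at hf
      simp only [SetLike.mem_coe, Ideal.mem_comap, Ideal.mem_span_singleton]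
      rcases hf with rfl | rfl | rfl | rfl
      · have : stmt13phi N (C ((N : ℕ) : ℤ) * X 0 ^ 2) = 0 := by simp [stmt13phi]
        rw [this]; exact dvd_zero _
      · have : stmt13phi N (X 0 ^ (p + 1)) = Polynomial.X ^ (p + 1) := by simp [stmt13phi]
        rw [this]; exact pow_dvd_pow _ (by omega)
      · have : stmt13phi N (X 0 ^ 2 * X 1) = 0 := by simp [stmt13phi]
        rw [this]; exact dvd_zero _
      · have : stmt13phi N (X 1 ^ 2) = 0 := by simp [stmt13phi]
        rw [this]; exact dvd_zero _
    have key : ∀ m : ℕ, m • (Ideal.Quotient.mk I (X 0 ^ 2))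
        = Ideal.Quotient.mk I (C ((m : ℕ) : ℤ) * X 0 ^ 2) := by
      intro m
      rw [map_mul, nsmul_eq_mul]
      congr 1
    have hord : ∀ m : ℕ, m • (Ideal.Quotient.mk I (X 0 ^ 2)) = 0 ↔ N ∣ m := by
      intro m
      rw [key]
      constructor
      · intro h
        have hmem : (C ((m : ℕ) : ℤ) * X 0 ^ 2 : MvPolynomial (Fin 2) ℤ) ∈ I :=
          Ideal.Quotient.eq_zero_iff_mem.mp h
        have := hIle hmem
        simp only [Ideal.mem_comap, Ideal.mem_span_singleton] at this
        have hφm : stmt13phi N (C ((m : ℕ) : ℤ) * X 0 ^ 2)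
            = Polynomial.C (((m : ℕ) : ℤ) : ZMod N) * Polynomial.X ^ 2 := by simp [stmt13phi]
        rw [hφm, Polynomial.X_pow_dvd_iff] at this
        have h2 := this 2 (by omega)
        simp [Polynomial.coeff_C_mul] at h2
        have hmz : (((m : ℕ) : ℤ) : ZMod N) = 0 := by exact_mod_cast h2
        rw [ZMod.intCast_zmod_eq_zero_iff_dvd] at hmz
        exact_mod_cast hmz
      · rintro ⟨k, rfl⟩
        rw [Ideal.Quotient.eq_zero_iff_mem]
        have hmem : (C ((N : ℕ) : ℤ) * X 0 ^ 2 : MvPolynomial (Fin 2) ℤ) ∈ I :=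
          Ideal.subset_span (by simp)
        have : (C ((N * k : ℕ) : ℤ) * X 0 ^ 2 : MvPolynomial (Fin 2) ℤ)
            = C ((k : ℕ) : ℤ) * (C ((N : ℕ) : ℤ) * X 0 ^ 2) := by
          rw [Nat.cast_mul, map_mul]; ring
        rw [this]
        exact Ideal.mul_mem_left _ _ hmem
    refine Nat.dvd_antisymm ?_ ?_
    · rw [addOrderOf_dvd_iff_nsmul_eq_zero]
      exact (hord N).mpr dvd_rfl
    · exact (hord _).mp (addOrderOf_nsmul_eq_zero _)
  · -- rational part
    refine ⟨Ideal.quotEquivOfEq ?_⟩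
    have hNQ : ((N : ℕ) : ℚ) ≠ 0 := by positivity
    have hx2 : (X 0 ^ 2 : MvPolynomial (Fin 2) ℚ) ∈
        Ideal.span ({C ((N : ℕ) : ℚ) * X 0 ^ 2, X 0 ^ (p + 1),
          X 0 ^ 2 * X 1, X 1 ^ 2} : Set (MvPolynomial (Fin 2) ℚ)) := by
      have hmem : (C ((N : ℕ) : ℚ) * X 0 ^ 2 : MvPolynomial (Fin 2) ℚ) ∈
          Ideal.span ({C ((N : ℕ) : ℚ) * X 0 ^ 2, X 0 ^ (p + 1),
            X 0 ^ 2 * X 1, X 1 ^ 2} : Set (MvPolynomial (Fin 2) ℚ)) :=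
        Ideal.subset_span (by simp)
      have h2 := Ideal.mul_mem_left _ (C (((N : ℕ) : ℚ)⁻¹)) hmem
      rwa [← mul_assoc, ← map_mul, inv_mul_cancel₀ hNQ, map_one, one_mul] at h2
    have hy2 : (X 1 ^ 2 : MvPolynomial (Fin 2) ℚ) ∈
        Ideal.span ({X 0 ^ 2, X 1 ^ 2} : Set (MvPolynomial (Fin 2) ℚ)) :=
      Ideal.subset_span (by simp)
    have hx2' : (X 0 ^ 2 : MvPolynomial (Fin 2) ℚ) ∈
        Ideal.span ({X 0 ^ 2, X 1 ^ 2} : Set (MvPolynomial (Fin 2) ℚ)) :=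
      Ideal.subset_span (by simp)
    apply le_antisymm
    · rw [Ideal.span_le]
      intro f hf
      simp only [Set.mem_insert_iff, Set.mem_singleton_iff] at hf
      rcases hf with rfl | rfl | rfl | rfl
      · exact Ideal.mul_mem_left _ _ hx2'
      · rw [show p + 1 = (p - 1) + 2 by omega, pow_add]
        exact Ideal.mul_mem_left _ _ hx2'
      · rw [mul_comm]
        exact Ideal.mul_mem_left _ _ hx2'
      · exact hy2
    · rw [Ideal.span_le]
      intro f hf
      simp only [Set.mem_insert_iff, Set.mem_singleton_iff] at hf
      rcases hf with rfl | rfl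
      · exact hx2
      · exact Ideal.subset_span (by simp)
end

section
/- Let l1, l2, w1, w2, p be positive reals/integers with p ≥ 1 and w1 > w2 > 0, and let f(b) be the polynomial f(b) = -l1·w1^(2p+3)·b^(2p+4) + (l2 + l1·w2)·w1^(2(p+1))·b^(2p+3) - ((p+1)²·l2 - l1·((p+1)·w1 + (p+2)·w2))·w1^(p+2)·w2^p·b^(p+3) + (2p(p+2)·l2 - (2p+3)·l1·(w1+w2))·w1^(p+1)·w2^(p+1)·b^(p+2) - ((p+1)²·l2 - l1·((p+2)·w1 + (p+1)·w2))·w1^p·w2^(p+2)·b^(p+1) + (l2 + l1·w1)·w2^(2(p+1))·b - l1·w2^(2p+3). Then b = w2/w1 is a root of f of multiplicity at least 3: f(w2/w1) = f'(w2/w1) = f''(w2/w1) = 0. -/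
/-!
Substituting `b = (w₂/w₁) t` turns `w₁ f(b)` into `w₂^(2p+3)` times
`l₂ P(t) + l₁w₁ Q(t) + l₁w₂ R(t)`, where `P = polyL2 p`, `Q = polyL1W1 p`, `R = polyL1W2 p`
depend on `p` alone. Each of them has a triple root at `t = 1`: since `t^n` contributes
`1, n, n(n-1)` to the value and the first two derivatives at `1`, this is a coefficient
identity in `p`. Rescaling back multiplies the `k`-th derivative by a nonzero constant.
-/

open Polynomial

theorem Polynomial.eval_one_iterate_derivative_X_pow {R : Type*} [CommSemiring R] (n k : ℕ) :
    (derivative^[k] (X ^ n : R[X])).eval 1 = n.descFactorial k := by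
  simp [iterate_derivative_X_pow_eq_C_mul]

theorem Polynomial.eval_one_iterate_derivative_X {R : Type*} [CommSemiring R] (k : ℕ) :
    (derivative^[k] (X : R[X])).eval 1 = (1).descFactorial k := by
  rw [← eval_one_iterate_derivative_X_pow, pow_one]

theorem Polynomial.iteratedDeriv_eval {𝕜 : Type*} [NontriviallyNormedField 𝕜] (P : 𝕜[X])
    (k : ℕ) : iteratedDeriv k (fun x => P.eval x) = fun x => (derivative^[k] P).eval x := by
  induction k generalizing P with
  | zero => simp
  | succ k ih =>
    rw [iteratedDeriv_succ', _root_.funext fun x => P.deriv (x := x), ih,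
      Function.iterate_succ_apply]

theorem iteratedDeriv_of_comp_const_mul_eq_eval {𝕜 : Type*} [NontriviallyNormedField 𝕜]
    {f : 𝕜 → 𝕜} {H : 𝕜[X]} {c : 𝕜} (hc : c ≠ 0) (hf : ∀ t, f (c * t) = H.eval t) (k : ℕ)
    (t : 𝕜) : iteratedDeriv k f (c * t) = (c ^ k)⁻¹ * (derivative^[k] H).eval t := by
  have hf' : f = fun x => H.eval (c⁻¹ * x) := funext fun x => by
    rw [← hf, mul_inv_cancel_left₀ hc]
  have hH : ContDiff 𝕜 k fun x => H.eval x := by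
    simpa only [coe_aeval_eq_eval] using H.contDiff_aeval (𝕜 := 𝕜) k
  rw [hf', iteratedDeriv_comp_const_mul hH, H.iteratedDeriv_eval]
  simp only [inv_mul_cancel_left₀ hc, inv_pow]

namespace CSCJoin

variable {R : Type*} [CommRing R]

noncomputable def polyL2 (p : ℕ) : R[X] :=
  X ^ (2 * p + 3) - C (((p : R) + 1) ^ 2) * X ^ (p + 3) + C (2 * (p : R) * (p + 2)) * X ^ (p + 2)
    - C (((p : R) + 1) ^ 2) * X ^ (p + 1) + X

noncomputable def polyL1W1 (p : ℕ) : R[X] :=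
  C ((p : R) + 1) * X ^ (p + 3) - C (2 * (p : R) + 3) * X ^ (p + 2) + C ((p : R) + 2) * X ^ (p + 1)
    + X - 1

noncomputable def polyL1W2 (p : ℕ) : R[X] :=
  -X ^ (2 * p + 4) + X ^ (2 * p + 3) + C ((p : R) + 2) * X ^ (p + 3)
    - C (2 * (p : R) + 3) * X ^ (p + 2) + C ((p : R) + 1) * X ^ (p + 1)

theorem eval_one_iterate_derivative_polyL2 (p : ℕ) {k : ℕ} (hk : k < 3) :
    (derivative^[k] (polyL2 p : R[X])).eval 1 = 0 := by
  simp only [polyL2, iterate_map_sub, iterate_map_add, iterate_derivative_C_mul, eval_sub, eval_add,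
    eval_mul, eval_C, eval_one_iterate_derivative_X_pow, eval_one_iterate_derivative_X]
  interval_cases k <;> simp [Nat.descFactorial_succ] <;> ring

theorem eval_one_iterate_derivative_polyL1W1 (p : ℕ) {k : ℕ} (hk : k < 3) :
    (derivative^[k] (polyL1W1 p : R[X])).eval 1 = 0 := by
  simp only [polyL1W1, iterate_map_sub, iterate_map_add, iterate_derivative_C_mul, eval_sub,
    eval_add, eval_mul, eval_C, eval_one_iterate_derivative_X_pow, eval_one_iterate_derivative_X,
    ← pow_zero (X : R[X])] -- the constant term becomes the monomial `X ^ 0`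
  interval_cases k <;> simp [Nat.descFactorial_succ] <;> ring

theorem eval_one_iterate_derivative_polyL1W2 (p : ℕ) {k : ℕ} (hk : k < 3) :
    (derivative^[k] (polyL1W2 p : R[X])).eval 1 = 0 := by
  simp only [polyL1W2, iterate_map_sub, iterate_map_add, iterate_map_neg, iterate_derivative_C_mul,
    eval_sub, eval_add, eval_neg, eval_mul, eval_C, eval_one_iterate_derivative_X_pow]
  interval_cases k <;> simp [Nat.descFactorial_succ] <;> ring

end CSCJoin

open CSCJoin in
theorem stmt16_general (p : ℕ) (l1 l2 w1 w2 : ℝ)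
    (hw2 : 0 < w2) (hw : w2 < w1)
    (f : ℝ → ℝ)
    (hf : ∀ b : ℝ, f b =
      -l1 * w1 ^ (2 * p + 3) * b ^ (2 * p + 4)
      + (l2 + l1 * w2) * w1 ^ (2 * (p + 1)) * b ^ (2 * p + 3)
      - (((p : ℝ) + 1) ^ 2 * l2 - l1 * (((p : ℝ) + 1) * w1 + ((p : ℝ) + 2) * w2))
        * w1 ^ (p + 2) * w2 ^ p * b ^ (p + 3)
      + (2 * (p : ℝ) * ((p : ℝ) + 2) * l2 - (2 * (p : ℝ) + 3) * l1 * (w1 + w2))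
        * w1 ^ (p + 1) * w2 ^ (p + 1) * b ^ (p + 2)
      - (((p : ℝ) + 1) ^ 2 * l2 - l1 * (((p : ℝ) + 2) * w1 + ((p : ℝ) + 1) * w2))
        * w1 ^ p * w2 ^ (p + 2) * b ^ (p + 1)
      + (l2 + l1 * w1) * w2 ^ (2 * (p + 1)) * b
      - l1 * w2 ^ (2 * p + 3)) :
    f (w2 / w1) = 0 ∧ iteratedDeriv 1 f (w2 / w1) = 0 ∧ iteratedDeriv 2 f (w2 / w1) = 0 := by
  have hw1 : w1 ≠ 0 := (hw2.trans hw).ne'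
  set H : ℝ[X] := C (w2 ^ (2 * p + 3) / w1) *
    (C l2 * polyL2 p + C (l1 * w1) * polyL1W1 p + C (l1 * w2) * polyL1W2 p)
  have hrescale : ∀ t, f (w2 / w1 * t) = H.eval t := by
    intro t
    simp only [hf, H, polyL2, polyL1W1, polyL1W2, eval_mul, eval_add, eval_sub, eval_neg, eval_C,
      eval_pow, eval_X, eval_one, mul_pow, div_pow]
    field_simp
    ring
  have hroot : ∀ k < 3, (derivative^[k] H).eval 1 = 0 := fun k hk => by
    simp only [H, iterate_derivative_C_mul, iterate_map_add, eval_mul, eval_add, eval_C,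
      eval_one_iterate_derivative_polyL2 p hk, eval_one_iterate_derivative_polyL1W1 p hk,
      eval_one_iterate_derivative_polyL1W2 p hk, mul_zero, add_zero]
  have hderiv : ∀ k < 3, iteratedDeriv k f (w2 / w1) = 0 := fun k hk => by
    rw [← mul_one (w2 / w1), iteratedDeriv_of_comp_const_mul_eq_eval
      (div_ne_zero hw2.ne' hw1) hrescale, hroot k hk, mul_zero]
  exact ⟨by simpa using hderiv 0 (by norm_num), hderiv 1 (by norm_num), hderiv 2 (by norm_num)⟩

/-- The CSC condition polynomial `f` of the join `M_{l₁,l₂,w}` has a root of multiplicity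
at least 3 at the forbidden value `b = w₂/w₁`: `f(w₂/w₁) = f'(w₂/w₁) = f''(w₂/w₁) = 0`. -/
theorem stmt16 (p : ℕ) (hp : 1 ≤ p) (l1 l2 w1 w2 : ℝ)
    (hl1 : 0 < l1) (hl2 : 0 < l2) (hw2 : 0 < w2) (hw : w2 < w1)
    (f : ℝ → ℝ)
    (hf : ∀ b : ℝ, f b =
      -l1 * w1 ^ (2 * p + 3) * b ^ (2 * p + 4)
      + (l2 + l1 * w2) * w1 ^ (2 * (p + 1)) * b ^ (2 * p + 3)
      - (((p : ℝ) + 1) ^ 2 * l2 - l1 * (((p : ℝ) + 1) * w1 + ((p : ℝ) + 2) * w2))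
        * w1 ^ (p + 2) * w2 ^ p * b ^ (p + 3)
      + (2 * (p : ℝ) * ((p : ℝ) + 2) * l2 - (2 * (p : ℝ) + 3) * l1 * (w1 + w2))
        * w1 ^ (p + 1) * w2 ^ (p + 1) * b ^ (p + 2)
      - (((p : ℝ) + 1) ^ 2 * l2 - l1 * (((p : ℝ) + 2) * w1 + ((p : ℝ) + 1) * w2))
        * w1 ^ p * w2 ^ (p + 2) * b ^ (p + 1)
      + (l2 + l1 * w1) * w2 ^ (2 * (p + 1)) * b
      - l1 * w2 ^ (2 * p + 3)) :
    f (w2 / w1) = 0 ∧ iteratedDeriv 1 f (w2 / w1) = 0 ∧ iteratedDeriv 2 f (w2 / w1) = 0 :=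
  stmt16_general p l1 l2 w1 w2 hw2 hw f hf
end
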